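/- For every sequence (P_m)_{m≥1} with P_m = P⁰ for m odd and P_m ∈ {P⁰, P¹} for m even, and for every m ≥ 0, the points 0 and −1 lie in distinct connected components of the interior of 𝒦_m. -/

import Mathlib

open Filter

/-- `P⁰(z) = z² − 1`. -/
def P0 : ℂ → ℂ := fun z => z ^ 2 - 1

/-- `P¹(z) = z³`. -/
def P1 : ℂ → ℂ := fun z => z ^ 3

/-- `Qcomp P m n z` is the value at `z` of the composition
`Q_{m,n} = P_n ∘ ⋯ ∘ P_{m+1}` (with `Q_{m,m} = id`). -/
def Qcomp (P : ℕ → ℂ → ℂ) (m n : ℕ) (z : ℂ) : ℂ :=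
  (List.range (n - m)).foldl (fun w k => P (m + k + 1) w) z

/-- Sequences with `P_m = P⁰` for odd `m` and `P_m ∈ {P⁰, P¹}` for even `m`. -/
def IsAdmissibleSeq (P : ℕ → ℂ → ℂ) : Prop :=
  ∀ m, 1 ≤ m → (Odd m → P m = P0) ∧ (Even m → P m = P0 ∨ P m = P1)

/-- The `m`-th iterated filled Julia set. -/
def filledJulia (P : ℕ → ℂ → ℂ) (m : ℕ) : Set ℂ :=
  {z | ∃ C : ℝ, ∀ n, m ≤ n → ‖Qcomp P m n z‖ ≤ C}

/-!
Every `P_k` permutes the cycle `{0, -1}`, so the orbits of `0` and `-1` stay in it at mutual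
distance `1`. The cycle attracts uniformly: a weighted distance to it contracts by `9/10` per step.
Hence small discs around `0` and `-1` lie in `𝒦_m`, and the set of points whose orbit is asymptotic
to that of `0` is open. On the interior of `𝒦_m` the iterates are bounded by `2`, hence
equicontinuous by the Schwarz lemma, so that set is also closed in the interior. It contains `0`
but not `-1`.
-/

open Metric Set Topology

section Qcomp

variable (P : ℕ → ℂ → ℂ) {m n : ℕ}

lemma Qcomp_of_le (h : n ≤ m) (z : ℂ) : Qcomp P m n z = z := by
  simp [Qcomp, Nat.sub_eq_zero_of_le h]

lemma Qcomp_succ (h : m ≤ n) (z : ℂ) : Qcomp P m (n + 1) z = P (n + 1) (Qcomp P m n z) := by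
  rw [Qcomp, show n + 1 - m = n - m + 1 by omega, List.range_succ, List.foldl_append,
    List.foldl_cons, List.foldl_nil, show m + (n - m) + 1 = n + 1 by omega]
  rfl

lemma Qcomp_Qcomp {N : ℕ} (h₁ : m ≤ N) (h₂ : N ≤ n) (z : ℂ) :
    Qcomp P N n (Qcomp P m N z) = Qcomp P m n z := by
  induction n, h₂ using Nat.le_induction with
  | base => rw [Qcomp_of_le P le_rfl]
  | succ n hn ih => rw [Qcomp_succ P hn, Qcomp_succ P (h₁.trans hn), ih]

end Qcomp

def IsP0P1Seq (P : ℕ → ℂ → ℂ) : Prop :=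
  ∀ k, 1 ≤ k → P k = P0 ∨ P k = P1

lemma IsAdmissibleSeq.isP0P1Seq {P : ℕ → ℂ → ℂ} (hP : IsAdmissibleSeq P) : IsP0P1Seq P := by
  intro k hk
  rcases Nat.even_or_odd k with he | ho
  · exact (hP k hk).2 he
  · exact .inl ((hP k hk).1 ho)

namespace IsP0P1Seq

variable {P : ℕ → ℂ → ℂ} (hP : IsP0P1Seq P) {k : ℕ}
include hP

lemma differentiable_Qcomp (m n : ℕ) : Differentiable ℂ (Qcomp P m n) := by
  rcases le_total n m with h | h
  · simpa only [funext (Qcomp_of_le P h)] using differentiable_fun_id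
  induction n, h using Nat.le_induction with
  | base => simpa only [funext (Qcomp_of_le P le_rfl)] using differentiable_fun_id
  | succ n hn ih =>
    rw [show Qcomp P m (n + 1) = P (n + 1) ∘ Qcomp P m n from funext (Qcomp_succ P hn)]
    rcases hP (n + 1) (by omega) with hp | hp <;> rw [hp]
    · exact ((differentiable_pow 2).sub_const 1).comp ih
    · exact (differentiable_pow 3).comp ih

lemma mul_norm_le_norm (hk : 1 ≤ k) {u : ℂ} (hu : 2 ≤ ‖u‖) : 3 / 2 * ‖u‖ ≤ ‖P k u‖ := by
  rcases hP k hk with hp | hp <;> rw [hp]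
  · have := norm_le_norm_sub_add (u ^ 2) 1
    rw [norm_pow, norm_one] at this
    change _ ≤ ‖u ^ 2 - 1‖
    nlinarith
  · change _ ≤ ‖u ^ 3‖
    rw [norm_pow]
    nlinarith [mul_le_mul hu hu zero_le_two (norm_nonneg u)]

lemma pow_mul_le_norm_Qcomp {m n : ℕ} (hmn : m ≤ n) {z : ℂ} (hz : 2 ≤ ‖Qcomp P m n z‖) (j : ℕ) :
    (3 / 2) ^ j * ‖Qcomp P m n z‖ ≤ ‖Qcomp P m (n + j) z‖ := by
  induction j with
  | zero => simp
  | succ j ih =>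
    have h2 : 2 ≤ ‖Qcomp P m (n + j) z‖ :=
      hz.trans (le_trans (le_mul_of_one_le_left (by positivity) (one_le_pow₀ (by norm_num))) ih)
    rw [← add_assoc, Qcomp_succ P (by omega), pow_succ']
    calc 3 / 2 * (3 / 2) ^ j * ‖Qcomp P m n z‖ ≤ 3 / 2 * ‖Qcomp P m (n + j) z‖ := by
          rw [mul_assoc]; gcongr
      _ ≤ _ := hP.mul_norm_le_norm (by omega) h2

lemma norm_Qcomp_le_two {m : ℕ} {z : ℂ} (hz : z ∈ filledJulia P m) (n : ℕ) :
    ‖Qcomp P m n z‖ ≤ 2 := by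
  obtain ⟨C, hC⟩ := hz
  have key : ∀ n, m ≤ n → ‖Qcomp P m n z‖ ≤ 2 := by
    intro n h
    by_contra! hn
    obtain ⟨j, hj⟩ := pow_unbounded_of_one_lt C (by norm_num : (1 : ℝ) < 3 / 2)
    have := hP.pow_mul_le_norm_Qcomp h hn.le j
    nlinarith [hC (n + j) (by omega), pow_pos (by norm_num : (0 : ℝ) < 3 / 2) j]
  rcases lt_or_ge n m with h | h
  · simpa only [Qcomp_of_le P h.le, Qcomp_of_le P le_rfl] using key m le_rfl
  · exact key n h

lemma swap_or_fix_cycle {k : ℕ} (hk : 1 ≤ k) :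
    (P k 0 = -1 ∧ P k (-1) = 0) ∨ (P k 0 = 0 ∧ P k (-1) = -1) := by
  rcases hP k hk with hp | hp <;> rw [hp] <;> norm_num [P0, P1]

lemma Qcomp_zero_negOne {m n : ℕ} (h : m ≤ n) :
    (Qcomp P m n 0 = 0 ∧ Qcomp P m n (-1) = -1) ∨
      (Qcomp P m n 0 = -1 ∧ Qcomp P m n (-1) = 0) := by
  induction n, h using Nat.le_induction with
  | base => simp [Qcomp_of_le]
  | succ n hn ih =>
    rw [Qcomp_succ P hn, Qcomp_succ P hn]
    rcases ih with ⟨h0, h1⟩ | ⟨h0, h1⟩ <;> rw [h0, h1] <;>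
      rcases hP.swap_or_fix_cycle (k := n + 1) (by omega) with h | h <;> simp [h]

lemma Qcomp_mem_cycle {m n : ℕ} (h : m ≤ n) {c : ℂ} (hc : c = 0 ∨ c = -1) :
    Qcomp P m n c = 0 ∨ Qcomp P m n c = -1 := by
  rcases hc with rfl | rfl <;> rcases hP.Qcomp_zero_negOne h with h | h <;> simp [h]

lemma norm_Qcomp_negOne_sub_Qcomp_zero {m n : ℕ} (h : m ≤ n) :
    ‖Qcomp P m n (-1) - Qcomp P m n 0‖ = 1 := by
  rcases hP.Qcomp_zero_negOne h with h | h <;> simp [h]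

end IsP0P1Seq

lemma norm_P0_le (w : ℂ) : ‖P0 w‖ ≤ ‖w + 1‖ * (‖w + 1‖ + 2) := by
  rw [show P0 w = (w + 1) * (w + 1 - 2) by simp only [P0]; ring, norm_mul]
  gcongr
  simpa using norm_sub_le (w + 1) 2

lemma norm_P1_add_one_le (w : ℂ) :
    ‖P1 w + 1‖ ≤ ‖w + 1‖ * (‖w + 1‖ ^ 2 + 3 * ‖w + 1‖ + 3) := by
  rw [show P1 w + 1 = (w + 1) * ((w + 1) ^ 2 - 3 * (w + 1) + 3) by simp only [P1]; ring,
    norm_mul]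
  gcongr
  refine (norm_add_le _ _).trans ?_
  gcongr
  · refine (norm_sub_le _ _).trans ?_
    simp [norm_pow]
  · simp

/-- Weights making the distance to the cycle `{0, -1}` contract by `9/10` at each step: `0` is
superattracting for both `P⁰` and `P¹`, while at `-1` the multipliers are `-2` for `P⁰` and `3`
for `P¹`; since `P¹` can only act at even times, it is followed by `P⁰`, which sends `-1` to `0`. -/
noncomputable def cycleWeight (n : ℕ) (c : ℂ) : ℝ :=
  if c = 0 then 1 else if Even n then 3 else 12

lemma one_le_cycleWeight (n : ℕ) (c : ℂ) : 1 ≤ cycleWeight n c := by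
  unfold cycleWeight; split_ifs <;> norm_num

lemma cycleWeight_le (n : ℕ) (c : ℂ) : cycleWeight n c ≤ 12 := by
  unfold cycleWeight; split_ifs <;> norm_num

namespace IsP0P1Seq

variable {P : ℕ → ℂ → ℂ} (hP : IsP0P1Seq P)
include hP

lemma cycleWeight_mul_norm_sub_zero_le (n : ℕ) {w : ℂ} (hw : ‖w‖ ≤ 3 / 40) :
    cycleWeight (n + 1) (P (n + 1) 0) * ‖P (n + 1) w - P (n + 1) 0‖ ≤
      9 / 10 * (cycleWeight n 0 * ‖w - 0‖) := by
  have hw0 := norm_nonneg w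
  rw [show cycleWeight n 0 = 1 by simp [cycleWeight], one_mul, sub_zero]
  rcases hP (n + 1) (by omega) with hp | hp <;> rw [hp]
  · have : cycleWeight (n + 1) (P0 0) * ‖P0 w - P0 0‖ ≤ 12 * ‖w‖ ^ 2 := by
      rw [show P0 w - P0 0 = w ^ 2 by simp only [P0]; ring, norm_pow]
      gcongr
      exact cycleWeight_le _ _
    nlinarith
  · have : cycleWeight (n + 1) (P1 0) * ‖P1 w - P1 0‖ = ‖w‖ ^ 3 := by
      simp [cycleWeight, P1]
    nlinarith [mul_le_mul_of_nonneg_left hw (mul_nonneg hw0 hw0)]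

end IsP0P1Seq

namespace IsAdmissibleSeq

variable {P : ℕ → ℂ → ℂ} (hP : IsAdmissibleSeq P)
include hP

lemma cycleWeight_mul_norm_sub_negOne_le (n : ℕ) {w : ℂ}
    (hw : cycleWeight n (-1) * ‖w - -1‖ ≤ 3 / 40) :
    cycleWeight (n + 1) (P (n + 1) (-1)) * ‖P (n + 1) w - P (n + 1) (-1)‖ ≤
      9 / 10 * (cycleWeight n (-1) * ‖w - -1‖) := by
  rw [sub_neg_eq_add] at hw ⊢
  have hd := norm_nonneg (w + 1)
  have hP0 : cycleWeight (n + 1) (P0 (-1)) * ‖P0 w - P0 (-1)‖ ≤ ‖w + 1‖ * (‖w + 1‖ + 2) := by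
    simpa [cycleWeight, P0] using norm_P0_le w
  rcases Nat.even_or_odd n with hn | hn
  · have hwt : cycleWeight n (-1) = 3 := by simp [cycleWeight, hn]
    rw [(hP (n + 1) (by omega)).1 hn.add_one, hwt]
    rw [hwt] at hw
    nlinarith
  · have hwt : cycleWeight n (-1) = 12 := by simp [cycleWeight, Nat.not_even_iff_odd.mpr hn]
    rw [hwt] at hw ⊢
    rcases hP.isP0P1Seq (n + 1) (by omega) with hp | hp <;> rw [hp]
    · nlinarith
    · have hP1 : cycleWeight (n + 1) (P1 (-1)) * ‖P1 w - P1 (-1)‖ ≤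
          3 * (‖w + 1‖ * (‖w + 1‖ ^ 2 + 3 * ‖w + 1‖ + 3)) := by
        simpa [cycleWeight, P1, hn.add_one, Odd.neg_pow (by decide : Odd 3)] using
          norm_P1_add_one_le w
      nlinarith [mul_le_mul_of_nonneg_left hw (mul_nonneg hd hd)]

lemma cycleWeight_mul_norm_sub_le (n : ℕ) {c w : ℂ} (hc : c = 0 ∨ c = -1)
    (hw : cycleWeight n c * ‖w - c‖ ≤ 3 / 40) :
    cycleWeight (n + 1) (P (n + 1) c) * ‖P (n + 1) w - P (n + 1) c‖ ≤
      9 / 10 * (cycleWeight n c * ‖w - c‖) := by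
  rcases hc with rfl | rfl
  · exact hP.isP0P1Seq.cycleWeight_mul_norm_sub_zero_le n (by simpa [cycleWeight] using hw)
  · exact hP.cycleWeight_mul_norm_sub_negOne_le n hw

lemma cycleWeight_mul_norm_Qcomp_sub_le {N n : ℕ} (h : N ≤ n) {c w : ℂ} (hc : c = 0 ∨ c = -1)
    (hw : cycleWeight N c * ‖w - c‖ ≤ 3 / 40) :
    cycleWeight n (Qcomp P N n c) * ‖Qcomp P N n w - Qcomp P N n c‖ ≤
      (9 / 10) ^ (n - N) * (cycleWeight N c * ‖w - c‖) := by
  induction n, h using Nat.le_induction with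
  | base => simp [Qcomp_of_le]
  | succ n hn ih =>
    have hpow : (9 / 10 : ℝ) ^ (n - N) ≤ 1 := pow_le_one₀ (by norm_num) (by norm_num)
    have hL : cycleWeight n (Qcomp P N n c) * ‖Qcomp P N n w - Qcomp P N n c‖ ≤ 3 / 40 :=
      ih.trans ((mul_le_of_le_one_left
        (mul_nonneg (zero_le_one.trans (one_le_cycleWeight _ _)) (norm_nonneg _)) hpow).trans hw)
    rw [Qcomp_succ P hn, Qcomp_succ P hn, show n + 1 - N = n - N + 1 by omega, pow_succ',
      mul_assoc]
    exact (hP.cycleWeight_mul_norm_sub_le n (hP.isP0P1Seq.Qcomp_mem_cycle hn hc) hL).trans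
      (by gcongr)

lemma norm_Qcomp_sub_le {N n : ℕ} (h : N ≤ n) {c w : ℂ} (hc : c = 0 ∨ c = -1)
    (hw : ‖w - c‖ ≤ 1 / 160) :
    ‖Qcomp P N n w - Qcomp P N n c‖ ≤ (9 / 10) ^ (n - N) * (3 / 40) := by
  have hL : cycleWeight N c * ‖w - c‖ ≤ 3 / 40 := by
    nlinarith [cycleWeight_le N c, norm_nonneg (w - c)]
  calc ‖Qcomp P N n w - Qcomp P N n c‖
      ≤ cycleWeight n (Qcomp P N n c) * ‖Qcomp P N n w - Qcomp P N n c‖ :=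
        le_mul_of_one_le_left (norm_nonneg _) (one_le_cycleWeight _ _)
    _ ≤ (9 / 10) ^ (n - N) * (cycleWeight N c * ‖w - c‖) :=
        hP.cycleWeight_mul_norm_Qcomp_sub_le h hc hL
    _ ≤ (9 / 10) ^ (n - N) * (3 / 40) := by gcongr

lemma closedBall_subset_filledJulia {c : ℂ} (hc : c = 0 ∨ c = -1) (m : ℕ) :
    closedBall c (1 / 160) ⊆ filledJulia P m := by
  intro w hw
  refine ⟨3 / 40 + 1, fun n hn => ?_⟩
  have hQc : ‖Qcomp P m n c‖ ≤ 1 := by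
    rcases hP.isP0P1Seq.Qcomp_mem_cycle hn hc with h | h <;> simp [h]
  have hpow : (9 / 10 : ℝ) ^ (n - m) ≤ 1 := pow_le_one₀ (by norm_num) (by norm_num)
  have := hP.norm_Qcomp_sub_le hn hc (by simpa [dist_eq_norm] using hw)
  have := norm_le_norm_sub_add (Qcomp P m n w) (Qcomp P m n c)
  nlinarith

lemma tendsto_Qcomp_sub_Qcomp {N : ℕ} {c w : ℂ} (hc : c = 0 ∨ c = -1)
    (hw : ‖w - c‖ ≤ 1 / 160) :
    Tendsto (fun n => Qcomp P N n w - Qcomp P N n c) atTop (𝓝 0) := by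
  have hgeom : Tendsto (fun n => (9 / 10 : ℝ) ^ (n - N) * (3 / 40)) atTop (𝓝 0) := by
    simpa using ((tendsto_pow_atTop_nhds_zero_of_lt_one (by norm_num) (by norm_num)).comp
      (tendsto_sub_atTop_nat N)).mul_const (3 / 40 : ℝ)
  exact squeeze_zero_norm' ((eventually_ge_atTop N).mono fun n hn =>
    hP.norm_Qcomp_sub_le hn hc hw) hgeom

end IsAdmissibleSeq

lemma equicontinuousAt_of_differentiableOn_of_norm_le {ι E F : Type*} [NormedAddCommGroup E]
    [NormedSpace ℂ E] [NormedAddCommGroup F] [NormedSpace ℂ F] {f : ι → E → F} {U : Set E}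
    (hU : IsOpen U) (hf : ∀ i, DifferentiableOn ℂ (f i) U) {C : ℝ}
    (hC : ∀ i, ∀ z ∈ U, ‖f i z‖ ≤ C) {z₀ : E} (hz₀ : z₀ ∈ U) : EquicontinuousAt f z₀ := by
  obtain ⟨r, hr, hball⟩ := Metric.isOpen_iff.mp hU z₀ hz₀
  refine Metric.equicontinuousAt_of_continuity_modulus (fun z => 2 * C / r * dist z z₀) ?_ f ?_
  · simpa using
      ((continuous_id.dist (continuous_const (y := z₀))).const_mul (2 * C / r)).tendsto z₀
  · filter_upwards [ball_mem_nhds z₀ hr] with z hz i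
    rw [dist_comm]
    refine Complex.dist_le_div_mul_dist_of_mapsTo_ball ((hf i).mono hball) (fun x hx => ?_) hz
    rw [mem_closedBall, dist_eq_norm]
    linarith [norm_sub_le (f i x) (f i z₀), hC i x (hball hx), hC i z₀ hz₀]

def zeroOrbitBasin (P : ℕ → ℂ → ℂ) (m : ℕ) : Set ℂ :=
  {z | Tendsto (fun n => Qcomp P m n z - Qcomp P m n 0) atTop (𝓝 0)}

lemma zero_mem_zeroOrbitBasin (P : ℕ → ℂ → ℂ) (m : ℕ) : 0 ∈ zeroOrbitBasin P m := by
  simp [zeroOrbitBasin]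

namespace IsP0P1Seq

lemma negOne_not_mem_zeroOrbitBasin {P : ℕ → ℂ → ℂ} (hP : IsP0P1Seq P) {m : ℕ} :
    -1 ∉ zeroOrbitBasin P m := fun h => by
  obtain ⟨n, hn, hlt⟩ :=
    ((eventually_ge_atTop m).and (NormedAddGroup.tendsto_nhds_zero.mp h 1 one_pos)).exists
  rw [hP.norm_Qcomp_negOne_sub_Qcomp_zero hn] at hlt
  exact lt_irrefl _ hlt

end IsP0P1Seq

namespace IsAdmissibleSeq

variable {P : ℕ → ℂ → ℂ} (hP : IsAdmissibleSeq P) {m : ℕ}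
include hP

lemma mem_interior_filledJulia {c : ℂ} (hc : c = 0 ∨ c = -1) :
    c ∈ interior (filledJulia P m) :=
  mem_interior_iff_mem_nhds.mpr <|
    mem_of_superset (closedBall_mem_nhds c (by norm_num)) (hP.closedBall_subset_filledJulia hc m)

lemma mem_zeroOrbitBasin_of_norm_le {N : ℕ} (hN : m ≤ N) {z : ℂ}
    (hz : ‖Qcomp P m N z - Qcomp P m N 0‖ ≤ 1 / 160) : z ∈ zeroOrbitBasin P m := by
  have hc := hP.isP0P1Seq.Qcomp_mem_cycle hN (c := 0) (.inl rfl)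
  refine (hP.tendsto_Qcomp_sub_Qcomp (N := N) hc hz).congr' ?_
  filter_upwards [eventually_ge_atTop N] with n hn
  rw [Qcomp_Qcomp P hN hn, Qcomp_Qcomp P hN hn]

lemma isOpen_zeroOrbitBasin : IsOpen (zeroOrbitBasin P m) := by
  refine isOpen_iff_mem_nhds.mpr fun z hz => ?_
  obtain ⟨N, hN, hzN⟩ := ((eventually_ge_atTop m).and
    (NormedAddGroup.tendsto_nhds_zero.mp hz (1 / 160) (by norm_num))).exists
  have hcont : Continuous fun w => ‖Qcomp P m N w - Qcomp P m N 0‖ :=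
    ((hP.isP0P1Seq.differentiable_Qcomp m N).continuous.sub continuous_const).norm
  filter_upwards [hcont.continuousAt.eventually (gt_mem_nhds hzN)] with w hw
  exact hP.mem_zeroOrbitBasin_of_norm_le hN hw.le

lemma isOpen_interior_filledJulia_diff_zeroOrbitBasin :
    IsOpen (interior (filledJulia P m) \ zeroOrbitBasin P m) := by
  refine isOpen_iff_mem_nhds.mpr fun z ⟨hzK, hzS⟩ => ?_
  have hequi : EquicontinuousAt (fun n => Qcomp P m n) z :=
    equicontinuousAt_of_differentiableOn_of_norm_le isOpen_interior
      (fun n => (hP.isP0P1Seq.differentiable_Qcomp m n).differentiableOn)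
      (fun n w hw => hP.isP0P1Seq.norm_Qcomp_le_two (interior_subset hw) n) hzK
  filter_upwards [isOpen_interior.mem_nhds hzK,
    Metric.equicontinuousAt_iff_right.mp hequi (1 / 320) (by norm_num)] with w hwK hwz
  refine ⟨hwK, fun hwS => hzS ?_⟩
  obtain ⟨N, hN, hwN⟩ := ((eventually_ge_atTop m).and
    (NormedAddGroup.tendsto_nhds_zero.mp hwS (1 / 320) (by norm_num))).exists
  refine hP.mem_zeroOrbitBasin_of_norm_le hN ?_
  have hzw := hwz N
  rw [dist_eq_norm] at hzw
  linarith [norm_sub_le_norm_sub_add_norm_sub (Qcomp P m N z) (Qcomp P m N w) (Qcomp P m N 0)]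

end IsAdmissibleSeq

/-- For every admissible sequence and every `m ≥ 0`, the points `0` and `−1`
lie in distinct connected components of the interior of `𝒦_m`. -/
theorem zero_negOne_in_distinct_components
    (P : ℕ → ℂ → ℂ) (hP : IsAdmissibleSeq P) (m : ℕ) :
    (0 : ℂ) ∈ interior (filledJulia P m) ∧
    (-1 : ℂ) ∈ interior (filledJulia P m) ∧
    connectedComponentIn (interior (filledJulia P m)) (0 : ℂ) ≠
      connectedComponentIn (interior (filledJulia P m)) (-1 : ℂ) := by
  have h0 := hP.mem_interior_filledJulia (m := m) (.inl rfl)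
  have h1 := hP.mem_interior_filledJulia (m := m) (.inr rfl)
  refine ⟨h0, h1, fun h => hP.isP0P1Seq.negOne_not_mem_zeroOrbitBasin (m := m) ?_⟩
  have hsub : connectedComponentIn (interior (filledJulia P m)) 0 ⊆ zeroOrbitBasin P m :=
    isPreconnected_connectedComponentIn.subset_left_of_subset_union hP.isOpen_zeroOrbitBasin
      hP.isOpen_interior_filledJulia_diff_zeroOrbitBasin disjoint_sdiff_right
      ((connectedComponentIn_subset _ _).trans (by simp))
      ⟨0, mem_connectedComponentIn h0, zero_mem_zeroOrbitBasin P m⟩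
  exact hsub (h ▸ mem_connectedComponentIn h1)
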